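/- arXiv:2005.08342 — 5 statements merged into one kernel-verified Lean document; each statement's English description precedes it below -/
import Mathlib

section
/- With the notation of the previous context, for all t ≥ 0 one has K² k_t = v^t (v^{t+1} - v^{-t-1}) K k_{t+1} + v^{2t} k_t. -/
open Finset

/-- Balanced quantum integer `[s]_v = (v^s - v^{-s})/(v - v⁻¹)`. -/
noncomputable def qint {F : Type*} [Field F] (v : F) (s : ℕ) : F :=
  (v ^ (s : ℤ) - v ^ (-(s : ℤ))) / (v - v⁻¹)

/-- Balanced quantum factorial `[n]_v! = ∏_{s=1}^n [s]_v`. -/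
noncomputable def qfact {F : Type*} [Field F] (v : F) (n : ℕ) : F :=
  ∏ s ∈ Finset.Icc 1 n, qint v s

/-- Balanced Gaussian binomial coefficient `[n choose k]_v`, defined by the
balanced Pascal recursion `[n+1,k]_v = v^{-(n+1-k)}[n,k-1]_v + v^k [n,k]_v`. -/
noncomputable def qbinom {F : Type*} [Field F] (v : F) : ℕ → ℕ → F
  | _, 0 => 1
  | 0, _ + 1 => 0
  | n + 1, k + 1 =>
      v ^ (-((n : ℤ) - k)) * qbinom v n k + v ^ ((k : ℤ) + 1) * qbinom v n (k + 1)

variable {A : Type*} [CommRing A] [Algebra (RatFunc ℚ) A]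

/-- The image of `v^t` in the algebra `A`. -/
noncomputable def vpow (A : Type*) [CommRing A] [Algebra (RatFunc ℚ) A] (t : ℤ) : A :=
  algebraMap (RatFunc ℚ) A ((RatFunc.X : RatFunc ℚ) ^ t)

/-- `a_t = (v^{-t} K - v^t K⁻¹)/(v - v⁻¹)`. -/
noncomputable def aelt (K : Aˣ) (t : ℤ) : A :=
  (vpow A (-t) * (K : A) - vpow A t * ((K⁻¹ : Aˣ) : A)) *
    algebraMap (RatFunc ℚ) A ((RatFunc.X : RatFunc ℚ) - (RatFunc.X : RatFunc ℚ)⁻¹)⁻¹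

/-- `k_t = (1/[t]_v!) ∏_{s=0}^{t-1} a_s`. -/
noncomputable def kelt (K : Aˣ) (t : ℕ) : A :=
  algebraMap (RatFunc ℚ) A (qfact (RatFunc.X : RatFunc ℚ) t)⁻¹ *
    ∏ s ∈ Finset.range t, aelt K (s : ℤ)

lemma xpow_sub_ne (s : ℕ) (hs : s ≠ 0) :
    (RatFunc.X : RatFunc ℚ) ^ (s:ℤ) - (RatFunc.X : RatFunc ℚ) ^ (-(s:ℤ)) ≠ 0 := by
  have hX : (RatFunc.X : RatFunc ℚ) ≠ 0 := RatFunc.X_ne_zero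
  intro h
  have h1 : (RatFunc.X : RatFunc ℚ) ^ (s:ℤ) = RatFunc.X ^ (-(s:ℤ)) := sub_eq_zero.mp h
  have h2 : (RatFunc.X : RatFunc ℚ) ^ (2*s) = 1 := by
    have h3 := congrArg (· * (RatFunc.X:RatFunc ℚ) ^ (s:ℤ)) h1
    simp only [← zpow_add₀ hX] at h3
    norm_num at h3
    rw [← zpow_natCast]
    push_cast
    rw [two_mul]
    exact h3
  have h4 : ((RatFunc.X : RatFunc ℚ) ^ (2*s)).intDegree = 0 := by rw [h2, RatFunc.intDegree_one]
  have h5 : ((RatFunc.X : RatFunc ℚ) ^ (2*s)).intDegree = 2*s := by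
    rw [← RatFunc.algebraMap_X, ← map_pow, RatFunc.intDegree_polynomial, Polynomial.natDegree_X_pow]
    push_cast
    ring
  omega

lemma xD_ne : (RatFunc.X : RatFunc ℚ) - (RatFunc.X : RatFunc ℚ)⁻¹ ≠ 0 := by
  have := xpow_sub_ne 1 one_ne_zero
  simpa using this

lemma qint_ne (s : ℕ) (hs : s ≠ 0) : qint (RatFunc.X : RatFunc ℚ) s ≠ 0 :=
  div_ne_zero (xpow_sub_ne s hs) xD_ne

lemma main_aux (K : Aˣ) (t : ℕ) :
    vpow A t * (vpow A ((t : ℤ) + 1) - vpow A (-((t : ℤ) + 1))) * (K : A) * kelt K (t + 1) =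
      ((K : A) ^ 2 - vpow A (2 * (t : ℤ))) * kelt K t := by
  set x : RatFunc ℚ := RatFunc.X with hx
  have hX : x ≠ 0 := RatFunc.X_ne_zero
  set φ := algebraMap (RatFunc ℚ) A with hφ
  have hq : qint x (t+1) ≠ 0 := qint_ne (t+1) (Nat.succ_ne_zero t)
  -- kelt split
  have hkelt : kelt K (t+1) = φ ((qint x (t+1))⁻¹) * (aelt K (t : ℤ) * kelt K t) := by
    rw [kelt, kelt, Finset.prod_range_succ]
    have hf : qfact x (t+1) = qfact x t * qint x (t+1) := by
      rw [qfact, qfact, Finset.prod_Icc_succ_top (Nat.succ_le_succ (Nat.zero_le t))]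
    rw [hf, mul_inv, map_mul]
    ring
  -- factorization of the bracket
  have hdiff : vpow A ((t : ℤ) + 1) - vpow A (-((t : ℤ) + 1)) = φ (qint x (t+1)) * φ (x - x⁻¹) := by
    have e : x ^ ((t:ℤ)+1) - x ^ (-((t:ℤ)+1)) = qint x (t+1) * (x - x⁻¹) := by
      rw [qint, div_mul_cancel₀ _ xD_ne]
      push_cast
      ring
    simp only [vpow, ← hφ, ← hx]
    rw [← map_sub, e, map_mul]
  have h1 : φ (qint x (t+1)) * φ ((qint x (t+1))⁻¹) = 1 := by
    rw [← map_mul, mul_inv_cancel₀ hq, map_one]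
  have h2 : φ (x - x⁻¹) * aelt K (t : ℤ) =
      vpow A (-(t:ℤ)) * (K : A) - vpow A (t:ℤ) * ((K⁻¹ : Aˣ) : A) := by
    rw [aelt]
    have : φ (x - x⁻¹) * φ ((x - x⁻¹)⁻¹) = 1 := by
      rw [← map_mul, mul_inv_cancel₀ xD_ne, map_one]
    calc φ (x - x⁻¹) * ((vpow A (-(t:ℤ)) * (K : A) - vpow A (t:ℤ) * ((K⁻¹ : Aˣ) : A)) * φ ((x - x⁻¹)⁻¹))
        = (φ (x - x⁻¹) * φ ((x - x⁻¹)⁻¹)) * (vpow A (-(t:ℤ)) * (K : A) - vpow A (t:ℤ) * ((K⁻¹ : Aˣ) : A)) := by ring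
      _ = _ := by rw [this, one_mul]
  have h3 : vpow A (t:ℤ) * vpow A (-(t:ℤ)) = 1 := by
    simp only [vpow, ← hφ, ← hx]
    rw [← map_mul, ← zpow_add₀ hX, add_neg_cancel, zpow_zero, map_one]
  have h4 : vpow A (t:ℤ) * vpow A (t:ℤ) = vpow A (2*(t:ℤ)) := by
    simp only [vpow, ← hφ, ← hx]
    rw [← map_mul, ← zpow_add₀ hX, two_mul]
  have h5 : (K : A) * ((K⁻¹ : Aˣ) : A) = 1 := by
    rw [← Units.val_mul, mul_inv_cancel, Units.val_one]
  rw [hkelt, hdiff]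
  linear_combination (vpow A (t:ℤ) * (K : A) * kelt K t * φ (x - x⁻¹) * aelt K (t:ℤ)) * h1 +
    (vpow A (t:ℤ) * (K : A) * kelt K t) * h2 + ((K : A)^2 * kelt K t) * h3 -
    ((K : A) * ((K⁻¹ : Aˣ) : A) * kelt K t) * h4 - (vpow A (2*(t:ℤ)) * kelt K t) * h5

theorem stmt_5 (K : Aˣ) (t : ℕ) :
    (K : A) ^ 2 * kelt K t =
      vpow A t * (vpow A ((t : ℤ) + 1) - vpow A (-((t : ℤ) + 1))) * (K : A) * kelt K (t + 1) +
        vpow A (2 * (t : ℤ)) * kelt K t := by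
  rw [main_aux]
  ring
end

section
/- Let H = ℚ(v)[K,K⁻¹] be the group Hopf algebra of ℤ over ℚ(v), with K group-like. Define k_t = (1/[t]_v!)∏_{s=0}^{t-1} (v^{-s}K - v^s K⁻¹)/(v - v⁻¹). Then the comultiplication satisfies Δ(k_t) = Σ_{s=0}^{t} k_{t-s} K^{-s} ⊗ k_s K^{t-s} for all t ∈ ℕ. -/
open Finset

open TensorProduct

/-- The Laurent polynomial ring `ℚ(v)[K, K⁻¹]`, i.e. the group algebra of `ℤ` over `ℚ(v)`. -/
noncomputable abbrev H6 := MonoidAlgebra (RatFunc ℚ) (Multiplicative ℤ)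

/-- The group-like element `K^n`. -/
noncomputable def Kz (n : ℤ) : H6 :=
  MonoidAlgebra.of (RatFunc ℚ) (Multiplicative ℤ) (Multiplicative.ofAdd n)

/-- `a_s = (v^{-s} K - v^s K⁻¹)/(v - v⁻¹)`. -/
noncomputable def a6 (s : ℤ) : H6 :=
  ((RatFunc.X : RatFunc ℚ) - (RatFunc.X : RatFunc ℚ)⁻¹)⁻¹ •
    ((RatFunc.X : RatFunc ℚ) ^ (-s) • Kz 1 - (RatFunc.X : RatFunc ℚ) ^ s • Kz (-1))

/-- `k_t = (1/[t]_v!) ∏_{s=0}^{t-1} a_s`. -/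
noncomputable def k6 (t : ℕ) : H6 :=
  (qfact (RatFunc.X : RatFunc ℚ) t)⁻¹ • ∏ s ∈ Finset.range t, a6 (s : ℤ)

/-! Since `K` is group-like, `Δ(a_{m+n}) = v^{-n} a_m ⊗ K + v^m K⁻¹ ⊗ a_n`; together with
`k_m a_m = [m+1] k_{m+1}` this turns `Σ_{m+n=t} (k_m K^{-n} ⊗ k_n K^m) Δ(a_t)`, after shifting
indices, into `Σ_{m+n=t+1} (v^{-n}[m] + v^m[n]) k_m K^{-n} ⊗ k_n K^m`. The coefficient is
`[m+n] = [t+1]`, so the formula passes from `t` to `t+1`. -/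

lemma RatFunc.not_isOfFinOrder_X {K : Type*} [CommRing K] [IsDomain K] :
    ¬ IsOfFinOrder (RatFunc.X : RatFunc K) := by
  rw [isOfFinOrder_iff_pow_eq_one]
  rintro ⟨n, hn, hXn⟩
  refine RatFunc.transcendental_X (K := K) (IsAlgebraic.of_pow hn ?_)
  rw [hXn]
  exact isAlgebraic_one

section QInt

variable {F : Type*} [Field F] {v : F}

lemma qint_zero (v : F) : qint v 0 = 0 := by
  simp [qint]

lemma qint_add (hv : v ≠ 0) (m n : ℕ) :
    v ^ (-(n : ℤ)) * qint v m + v ^ (m : ℤ) * qint v n = qint v (m + n) := by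
  simp only [qint, mul_div_assoc', ← add_div]
  congr 1
  push_cast
  simp only [zpow_add₀ hv, zpow_neg]
  ring

lemma qint_ne_zero (hv₀ : v ≠ 0) (hv : ¬ IsOfFinOrder v) {s : ℕ} (hs : 0 < s) :
    qint v s ≠ 0 := by
  rw [isOfFinOrder_iff_pow_eq_one] at hv
  push Not at hv
  refine div_ne_zero (sub_ne_zero.mpr fun h ↦ hv (2 * s) (by omega) ?_)
    (sub_ne_zero.mpr fun h ↦ hv 2 two_pos ?_)
  · rw [zpow_neg, zpow_natCast, ← mul_eq_one_iff_eq_inv₀ (pow_ne_zero s hv₀)] at h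
    rw [two_mul, pow_add, h]
  · rw [← mul_eq_one_iff_eq_inv₀ hv₀] at h
    rw [sq, h]

lemma qfact_succ (v : F) (n : ℕ) : qfact v (n + 1) = qfact v n * qint v (n + 1) :=
  Finset.prod_Icc_succ_top (by omega) _

end QInt

lemma smul_sub_zpow_add {F M : Type*} [Field F] [AddCommGroup M] [Module F M] {v : F} (hv : v ≠ 0)
    (c : F) (m n : ℤ) (x y z : M) :
    c • (v ^ (-(m + n)) • x - v ^ (m + n) • z) =
      v ^ (-n) • c • (v ^ (-m) • x - v ^ m • y) +
        v ^ m • c • (v ^ (-n) • y - v ^ n • z) := by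
  simp only [zpow_add₀ hv, zpow_neg]
  module

local notation "v" => (RatFunc.X : RatFunc ℚ)

lemma Kz_zero : Kz 0 = 1 := rfl

lemma Kz_add (m n : ℤ) : Kz (m + n) = Kz m * Kz n := by
  simp [Kz, ofAdd_add]

lemma k6_zero : k6 0 = 1 := by
  simp [k6, qfact]

lemma k6_mul_a6 (m : ℕ) : k6 m * a6 m = qint v (m + 1) • k6 (m + 1) := by
  have hq := qint_ne_zero RatFunc.X_ne_zero (RatFunc.not_isOfFinOrder_X (K := ℚ)) (Nat.succ_pos m)
  rw [k6, k6, smul_mul_assoc, Finset.prod_range_succ, smul_smul, qfact_succ, mul_inv,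
    mul_left_comm, mul_inv_cancel₀ hq, mul_one]

section Coproduct

variable (Δ : H6 →ₐ[RatFunc ℚ] H6 ⊗[RatFunc ℚ] H6) (hΔ : Δ (Kz 1) = Kz 1 ⊗ₜ Kz 1)
include hΔ

lemma map_Kz (n : ℤ) : Δ (Kz n) = Kz n ⊗ₜ Kz n := by
  let grouplike : Multiplicative ℤ →* H6 ⊗[RatFunc ℚ] H6 :=
    ((Algebra.TensorProduct.includeLeft (S := RatFunc ℚ) (B := H6)).toMonoidHom.comp
      (MonoidAlgebra.of _ _)) *
      ((Algebra.TensorProduct.includeRight (A := H6)).toMonoidHom.comp (MonoidAlgebra.of _ _))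
  have h := MonoidHom.ext_mint (f := Δ.toMonoidHom.comp (MonoidAlgebra.of _ _)) (g := grouplike)
    (by simpa [grouplike, Kz] using hΔ)
  simpa [grouplike, Kz] using DFunLike.congr_fun h (Multiplicative.ofAdd n)

lemma map_a6_add (m n : ℤ) :
    Δ (a6 (m + n)) = v ^ (-n) • (a6 m ⊗ₜ Kz 1) + v ^ m • (Kz (-1) ⊗ₜ a6 n) := by
  simp only [a6, map_smul, map_sub, map_Kz Δ hΔ, ← smul_tmul', tmul_smul, sub_tmul, tmul_sub]
  exact smul_sub_zpow_add (M := H6 ⊗[RatFunc ℚ] H6) RatFunc.X_ne_zero _ m n _ _ _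

noncomputable def coprodTerm (m n : ℕ) : H6 ⊗[RatFunc ℚ] H6 :=
  (k6 m * Kz (-n)) ⊗ₜ (k6 n * Kz m)

lemma coprodTerm_mul_map_a6 (m n : ℕ) :
    coprodTerm m n * Δ (a6 (m + n)) =
      (v ^ (-(n : ℤ)) * qint v (m + 1)) • coprodTerm (m + 1) n +
        (v ^ (m : ℤ) * qint v (n + 1)) • coprodTerm m (n + 1) := by
  rw [map_a6_add Δ hΔ, mul_add, mul_smul_comm, mul_smul_comm, coprodTerm,
    Algebra.TensorProduct.tmul_mul_tmul, Algebra.TensorProduct.tmul_mul_tmul,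
    mul_right_comm (k6 m) _ (a6 m), k6_mul_a6, mul_right_comm (k6 n) _ (a6 n), k6_mul_a6,
    mul_assoc (k6 n), ← Kz_add, mul_assoc (k6 m), ← Kz_add]
  simp only [smul_mul_assoc, ← smul_tmul', tmul_smul, smul_smul, coprodTerm]
  push_cast
  rw [neg_add]

lemma map_k6 (t : ℕ) : Δ (k6 t) = ∑ p ∈ antidiagonal t, coprodTerm p.1 p.2 := by
  induction t with
  | zero => simp [coprodTerm, k6_zero, Kz_zero, Algebra.TensorProduct.one_def]
  | succ t ih =>
    have hq := qint_ne_zero RatFunc.X_ne_zero (RatFunc.not_isOfFinOrder_X (K := ℚ)) t.succ_pos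
    refine smul_right_injective _ hq ?_
    calc qint v (t + 1) • Δ (k6 (t + 1))
        = ∑ p ∈ antidiagonal t, coprodTerm p.1 p.2 * Δ (a6 (p.1 + p.2)) := by
          rw [← map_smul, ← k6_mul_a6, map_mul, ih, sum_mul]
          refine sum_congr rfl fun p hp ↦ ?_
          rw [← mem_antidiagonal.mp hp]
          push_cast
          rfl
      _ = ∑ p ∈ antidiagonal t,
            ((v ^ (-(p.2 : ℤ)) * qint v (p.1 + 1)) • coprodTerm (p.1 + 1) p.2 +
              (v ^ (p.1 : ℤ) * qint v (p.2 + 1)) • coprodTerm p.1 (p.2 + 1)) :=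
          sum_congr rfl fun p _ ↦ coprodTerm_mul_map_a6 Δ hΔ p.1 p.2
      _ = ∑ p ∈ antidiagonal (t + 1),
            (v ^ (-(p.2 : ℤ)) * qint v p.1 + v ^ (p.1 : ℤ) * qint v p.2) •
              coprodTerm p.1 p.2 := by
          simp only [add_smul, sum_add_distrib]
          rw [Nat.sum_antidiagonal_succ, Nat.sum_antidiagonal_succ' (f := fun p ↦
            (v ^ (p.1 : ℤ) * qint v p.2) • coprodTerm p.1 p.2)]
          simp [qint_zero]
      _ = qint v (t + 1) • ∑ p ∈ antidiagonal (t + 1), coprodTerm p.1 p.2 := by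
          rw [smul_sum]
          refine sum_congr rfl fun p hp ↦ ?_
          rw [qint_add RatFunc.X_ne_zero, mem_antidiagonal.mp hp]

end Coproduct

/-- The comultiplication of the group Hopf algebra `ℚ(v)[ℤ]` satisfies
`Δ(k_t) = Σ_{s=0}^{t} k_{t-s} K^{-s} ⊗ k_s K^{t-s}`. -/
theorem stmt_6 (Δ : H6 →ₐ[RatFunc ℚ] (H6 ⊗[RatFunc ℚ] H6))
    (hΔ : Δ (Kz 1) = Kz 1 ⊗ₜ[RatFunc ℚ] Kz 1) (t : ℕ) :
    Δ (k6 t) =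
      ∑ s ∈ Finset.range (t + 1),
        (k6 (t - s) * Kz (-(s : ℤ))) ⊗ₜ[RatFunc ℚ] (k6 s * Kz ((t : ℤ) - s)) := by
  rw [map_k6 Δ hΔ, ← Nat.sum_antidiagonal_swap,
    Nat.sum_antidiagonal_eq_sum_range_succ_mk (fun p ↦ coprodTerm p.swap.1 p.swap.2)]
  refine sum_congr rfl fun s hs ↦ ?_
  rw [coprodTerm, Prod.swap_prod_mk, Nat.cast_sub (mem_range_succ_iff.mp hs)]
end

section
/- With p_{n,s} defined by the recursion of the previous context, for every n ≥ 1 one has p_{n,n} = v^{-n(n-1)/2} (-1)^{n-1} (v - v^{-1})^{n-1} [n-1]_v!. -/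
open Finset

/-- `φ_n(j) = 0` if `n - j` is even, `1` if odd. -/
def phi (n j : ℕ) : ℕ := if Even ((n : ℤ) - j) then 0 else 1

/-- The polynomials `p_{n,s} ∈ ℚ(v)` defined recursively. -/
noncomputable def pp (n : ℕ) : ℕ → RatFunc ℚ
  | 0 => 0
  | 1 => (RatFunc.X : RatFunc ℚ) ^ (-(phi n 1 : ℤ))
  | s + 2 =>
      ((RatFunc.X : RatFunc ℚ) ^ ((n : ℤ) * (s + 2)) -
          (RatFunc.X : RatFunc ℚ) ^ (-((n : ℤ) * (s + 2)))) /
        ((RatFunc.X : RatFunc ℚ) ^ ((phi n (s + 2) : ℤ) * (s + 2)) *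
          ((RatFunc.X : RatFunc ℚ) ^ (n : ℤ) - (RatFunc.X : RatFunc ℚ) ^ (-(n : ℤ)))) -
      ∑ t ∈ (Finset.Ico 1 (s + 2)).attach,
        pp n t.1 * qbinom (RatFunc.X : RatFunc ℚ) (s + 2) t.1 *
          (RatFunc.X : RatFunc ℚ) ^ (((phi n t.1 : ℤ) - (phi n (s + 2) : ℤ)) * (s + 2))
  decreasing_by exact (Finset.mem_Ico.mp t.2).2

/-! Put `x = K²`. Multiplied by `Kⁿ`, the identity characterizing the `p_{n,s}` says that the
polynomial `ppDefect n`, of degree at most `n`, is zero. The recursion defining `p_{n,s}` is that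
identity specialized to `K = vˢ`, so `ppDefect n` vanishes at the `n + 1` points `x = v^{2s}`,
`0 ≤ s ≤ n`, and hence identically. At `x = 0` only the top term `t = n` survives, and the constant
term `(-1)ⁿ v^{n(n-1)/2}` of `∏_{j<n} (v⁻ʲ x - vʲ)` then determines `p_{n,n}`. -/

open Polynomial

noncomputable section

section QAnalogues

variable {F : Type*} [Field F] (v : F)

theorem qbinom_zero_right (s : ℕ) : qbinom v s 0 = 1 := by cases s <;> rfl

theorem qbinom_succ_succ (s k : ℕ) :
    qbinom v (s + 1) (k + 1) =
      v ^ (-((s : ℤ) - k)) * qbinom v s k + v ^ ((k : ℤ) + 1) * qbinom v s (k + 1) := rfl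

theorem qbinom_of_lt {s t : ℕ} (h : s < t) : qbinom v s t = 0 := by
  induction s generalizing t with
  | zero => obtain ⟨k, rfl⟩ := Nat.exists_eq_add_one.mpr h; rfl
  | succ s ih =>
    obtain ⟨k, rfl⟩ := Nat.exists_eq_add_one.mpr (Nat.zero_lt_of_lt h)
    rw [qbinom_succ_succ, ih (by omega), ih (by omega), mul_zero, mul_zero, add_zero]

theorem qbinom_self (s : ℕ) : qbinom v s s = 1 := by
  induction s with
  | zero => rfl
  | succ s ih => simp [qbinom_succ_succ, ih, qbinom_of_lt v (Nat.lt_succ_self s)]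

def qprod (t : ℕ) : F := ∏ j ∈ Icc 1 t, (v ^ (j : ℤ) - v ^ (-(j : ℤ)))

theorem qprod_succ (t : ℕ) : qprod v (t + 1) = qprod v t * (v ^ (t + 1) - (v ^ (t + 1))⁻¹) := by
  rw [qprod, prod_Icc_succ_top (by omega), zpow_neg, zpow_natCast, qprod]

theorem qprod_eq_mul_qfact (h : v - v⁻¹ ≠ 0) (t : ℕ) : qprod v t = (v - v⁻¹) ^ t * qfact v t := by
  have hcard : #(Icc 1 t) = t := by simp
  rw [qprod, qfact, ← hcard, ← prod_const, hcard, ← prod_mul_distrib]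
  exact prod_congr rfl fun j _ ↦ (mul_div_cancel₀ _ h).symm

/-- Evaluated at `x = K²`, `kPoly v t` is `K ^ t * ∏_{j<t} (v⁻ʲ K - vʲ K⁻¹)`. -/
def kPoly (t : ℕ) : F[X] := ∏ j ∈ range t, (C (v ^ (-(j : ℤ))) * X - C (v ^ (j : ℤ)))

theorem kPoly_succ (t : ℕ) : kPoly v (t + 1) = kPoly v t * (C (v ^ t)⁻¹ * X - C (v ^ t)) := by
  rw [kPoly, prod_range_succ, zpow_neg, zpow_natCast, kPoly]

theorem kPoly_eval_zero (t : ℕ) : (kPoly v t).eval 0 = (-1) ^ t * v ^ t.choose 2 := by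
  induction t with
  | zero => simp [kPoly]
  | succ t ih =>
    rw [kPoly_succ, eval_mul, ih, Nat.choose_succ_succ', Nat.choose_one_right]
    simp only [eval_sub, eval_mul, eval_C, eval_X, mul_zero, zero_sub]
    ring

theorem natDegree_kPoly_le (t : ℕ) : (kPoly v t).natDegree ≤ t := by
  induction t with
  | zero => simp [kPoly]
  | succ t ih =>
    rw [kPoly_succ]
    refine (natDegree_mul_le).trans (add_le_add ih ?_)
    compute_degree

variable {v}

theorem kPoly_succ_eval_sq_mul (hv : v ≠ 0) (k : ℕ) (y : F) :
    (kPoly v (k + 1)).eval (v ^ 2 * y) = v ^ (k + 1) * (v * y - v⁻¹) * (kPoly v k).eval y := by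
  induction k with
  | zero =>
    rw [kPoly_succ, kPoly, range_zero, prod_empty]
    simp only [pow_zero, inv_one, map_one, one_mul, eval_sub, eval_X, eval_one]
    field_simp
    ring
  | succ k ih =>
    rw [kPoly_succ, eval_mul, ih, kPoly_succ v k]
    simp only [eval_mul, eval_sub, eval_C, eval_X]
    field_simp
    ring

theorem kPoly_eval_pow_two_mul (hv : v ≠ 0) (s t : ℕ) :
    (kPoly v t).eval (v ^ (2 * s)) = v ^ (s * t) * qprod v t * qbinom v s t := by
  induction s generalizing t with
  | zero =>
    cases t with
    | zero => simp [kPoly, qprod, qbinom_zero_right]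
    | succ k => simp [kPoly, eval_prod, prod_range_succ', qbinom_of_lt]
  | succ s ih =>
    cases t with
    | zero => simp [kPoly, qprod, qbinom_zero_right]
    | succ k =>
      have h := ih (k + 1)
      rw [kPoly_succ, eval_mul, ih k, qprod_succ] at h
      simp only [eval_mul, eval_sub, eval_C, eval_X] at h
      rw [mul_add 2, pow_add, mul_one, mul_comm, kPoly_succ_eval_sq_mul hv, ih k, qbinom_succ_succ,
        qprod_succ, zpow_neg, zpow_sub₀ hv, zpow_add_one₀ hv, zpow_natCast, zpow_natCast]
      linear_combination (norm := (field_simp; ring)) (v ^ (k + 1)) ^ 2 * h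

end QAnalogues

section RatFuncX

variable {K : Type*} [Field K]

theorem RatFunc.X_pow_injective : Function.Injective fun i : ℕ ↦ (RatFunc.X : RatFunc K) ^ i := by
  intro i j h
  simp only [← RatFunc.algebraMap_X, ← map_pow] at h
  simpa using congrArg natDegree (RatFunc.algebraMap_injective K h)

theorem RatFunc.X_zpow_sub_zpow_neg_ne_zero {j : ℕ} (hj : j ≠ 0) :
    (RatFunc.X : RatFunc K) ^ (j : ℤ) - RatFunc.X ^ (-(j : ℤ)) ≠ 0 := by
  rw [sub_ne_zero, zpow_neg, zpow_natCast]
  intro h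
  have h2 : (RatFunc.X : RatFunc K) ^ (j + j) = RatFunc.X ^ 0 := by
    rw [pow_add, pow_zero]
    nth_rewrite 2 [h]
    exact mul_inv_cancel₀ (pow_ne_zero j RatFunc.X_ne_zero)
  exact hj (by simpa using RatFunc.X_pow_injective h2)

theorem qprod_X_ne_zero (t : ℕ) : qprod (RatFunc.X : RatFunc K) t ≠ 0 :=
  prod_ne_zero_iff.mpr fun _ hj ↦
    RatFunc.X_zpow_sub_zpow_neg_ne_zero (Nat.one_le_iff_ne_zero.mp (mem_Icc.mp hj).1)

end RatFuncX

local notation "𝐯" => (RatFunc.X : RatFunc ℚ)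

theorem pp_one (n : ℕ) : pp n 1 = 𝐯 ^ (-(phi n 1 : ℤ)) := by
  rw [pp]

theorem pp_add_two (n s : ℕ) :
    pp n (s + 2) =
      (𝐯 ^ ((n : ℤ) * (s + 2)) - 𝐯 ^ (-((n : ℤ) * (s + 2)))) /
          (𝐯 ^ ((phi n (s + 2) : ℤ) * (s + 2)) * (𝐯 ^ (n : ℤ) - 𝐯 ^ (-(n : ℤ)))) -
        ∑ t ∈ Icc 1 (s + 1),
          pp n t * qbinom 𝐯 (s + 2) t * 𝐯 ^ (((phi n t : ℤ) - phi n (s + 2)) * (s + 2)) := by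
  rw [pp, sum_attach (Ico 1 (s + 2))
    (fun t ↦ pp n t * qbinom 𝐯 (s + 2) t * 𝐯 ^ (((phi n t : ℤ) - phi n (s + 2)) * (s + 2))),
    show Ico 1 (s + 2) = Icc 1 (s + 1) from Ico_add_one_right_eq_Icc 1 (s + 1)]

theorem sum_pp_mul_qbinom {n : ℕ} (hn : n ≠ 0) (s : ℕ) :
    (𝐯 ^ (n : ℤ) - 𝐯 ^ (-(n : ℤ))) *
        ∑ t ∈ Icc 1 s, pp n t * qbinom 𝐯 s t * 𝐯 ^ ((phi n t : ℤ) * s) =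
      𝐯 ^ ((n : ℤ) * s) - 𝐯 ^ (-((n : ℤ) * s)) := by
  have hv : 𝐯 ≠ 0 := RatFunc.X_ne_zero
  match s with
  | 0 => simp
  | 1 => simp [pp_one, qbinom_self, inv_mul_cancel₀ (pow_ne_zero _ hv)]
  | m + 2 =>
    have hD := RatFunc.X_zpow_sub_zpow_neg_ne_zero (K := ℚ) hn
    set φ : ℤ := (phi n (m + 2) : ℤ)
    have hshift : ∑ t ∈ Icc 1 (m + 1),
          pp n t * qbinom 𝐯 (m + 2) t * 𝐯 ^ (((phi n t : ℤ) - φ) * (m + 2)) =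
        (∑ t ∈ Icc 1 (m + 1), pp n t * qbinom 𝐯 (m + 2) t * 𝐯 ^ ((phi n t : ℤ) * (m + 2))) *
          (𝐯 ^ (φ * (m + 2)))⁻¹ := by
      rw [sum_mul]
      refine sum_congr rfl fun t _ ↦ ?_
      rw [sub_mul, zpow_sub₀ hv, div_eq_mul_inv]
      ring
    rw [sum_Icc_succ_top (by omega), pp_add_two, qbinom_self, hshift]
    push_cast
    field_simp
    ring

def kShift (n t : ℕ) : ℕ := (n - t + 1) / 2

theorem two_mul_kShift_add {n t : ℕ} (ht : t ≤ n) : 2 * kShift n t + t = n + phi n t := by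
  unfold kShift phi
  split_ifs with h
  · obtain ⟨r, hr⟩ := h
    omega
  · obtain ⟨r, hr⟩ := Int.not_even_iff_odd.mp h
    omega

/-- `ppDefect n (K²) = Kⁿ (Kⁿ - K⁻ⁿ - (vⁿ - v⁻ⁿ) ∑ₜ p_{n,t} k_t K^{φ_n(t)})` with
`k_t = K⁻ᵗ kPoly v t (K²) / qprod v t`. -/
def ppDefect (n : ℕ) : (RatFunc ℚ)[X] :=
  X ^ n - 1 - C (𝐯 ^ (n : ℤ) - 𝐯 ^ (-(n : ℤ))) *
    ∑ t ∈ Icc 1 n, C (pp n t / qprod 𝐯 t) * X ^ kShift n t * kPoly 𝐯 t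

theorem natDegree_ppDefect_le (n : ℕ) : (ppDefect n).natDegree ≤ n := by
  have hterm : ∀ t ∈ Icc 1 n,
      (C (pp n t / qprod 𝐯 t) * X ^ kShift n t * kPoly 𝐯 t).natDegree ≤ n := by
    intro t ht
    have hle : kShift n t + t ≤ n := by
      have := (mem_Icc.mp ht).2
      unfold kShift
      omega
    exact (natDegree_mul_le_of_le (natDegree_C_mul_X_pow_le _ _) (natDegree_kPoly_le _ _)).trans hle
  refine (natDegree_sub_le _ _).trans (max_le ((natDegree_sub_le _ _).trans (max_le ?_ ?_)) ?_)
  · exact natDegree_X_pow_le n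
  · simp
  · exact (natDegree_C_mul_le _ _).trans (natDegree_sum_le_of_forall_le _ _ hterm)

theorem ppDefect_eval_X_pow {n s : ℕ} (hn : n ≠ 0) (hs : s ≤ n) :
    (ppDefect n).eval (𝐯 ^ (2 * s)) = 0 := by
  have hv : 𝐯 ≠ 0 := RatFunc.X_ne_zero
  have hterm : ∀ t ∈ Icc 1 n,
      pp n t / qprod 𝐯 t * (𝐯 ^ (2 * s)) ^ kShift n t * (kPoly 𝐯 t).eval (𝐯 ^ (2 * s)) =
        𝐯 ^ ((n : ℤ) * s) * (pp n t * qbinom 𝐯 s t * 𝐯 ^ ((phi n t : ℤ) * s)) := by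
    intro t ht
    have hexp : 2 * s * kShift n t + s * t = n * s + phi n t * s := by
      linear_combination s * two_mul_kShift_add (mem_Icc.mp ht).2
    rw [kPoly_eval_pow_two_mul hv, ← pow_mul]
    field_simp [qprod_X_ne_zero]
    rw [← Nat.cast_mul, ← Nat.cast_mul, zpow_natCast, zpow_natCast, mul_assoc (pp n t), ← pow_add,
      hexp, pow_add]
    ring
  have hsum : ∑ t ∈ Icc 1 n, pp n t * qbinom 𝐯 s t * 𝐯 ^ ((phi n t : ℤ) * s) =
      ∑ t ∈ Icc 1 s, pp n t * qbinom 𝐯 s t * 𝐯 ^ ((phi n t : ℤ) * s) := by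
    refine (sum_subset (Icc_subset_Icc_right hs) fun t htn hts ↦ ?_).symm
    rw [qbinom_of_lt _ (by simp only [mem_Icc] at htn hts; omega), mul_zero, zero_mul]
  simp only [ppDefect, eval_sub, eval_mul, eval_pow, eval_X, eval_one, eval_C, eval_finsetSum]
  rw [sum_congr rfl hterm, ← mul_sum, hsum, mul_left_comm, sum_pp_mul_qbinom hn]
  rw [← Nat.cast_mul, zpow_neg, zpow_natCast, ← pow_mul]
  field_simp
  ring

theorem ppDefect_eq_zero {n : ℕ} (hn : n ≠ 0) : ppDefect n = 0 := by
  have hinj : Function.Injective fun i : Fin (n + 1) ↦ 𝐯 ^ (2 * (i : ℕ)) :=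
    RatFunc.X_pow_injective.comp ((mul_right_injective₀ two_ne_zero).comp Fin.val_injective)
  refine eq_zero_of_natDegree_lt_card_of_eval_eq_zero _ hinj
    (fun i ↦ ppDefect_eval_X_pow hn i.is_le) ?_
  simpa using Nat.lt_succ_of_le (natDegree_ppDefect_le n)

theorem ppDefect_eval_zero {n : ℕ} (hn : n ≠ 0) :
    (ppDefect n).eval 0 =
      -1 - (𝐯 ^ (n : ℤ) - 𝐯 ^ (-(n : ℤ))) * (pp n n / qprod 𝐯 n * ((-1) ^ n * 𝐯 ^ n.choose 2)) := by
  have hlower : ∀ t ∈ Icc 1 n, t ≠ n →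
      pp n t / qprod 𝐯 t * 0 ^ kShift n t * (kPoly 𝐯 t).eval 0 = 0 := by
    intro t ht htn
    rw [zero_pow (by simp only [mem_Icc] at ht; unfold kShift; omega), mul_zero, zero_mul]
  simp only [ppDefect, eval_sub, eval_mul, eval_pow, eval_X, eval_one, eval_C, eval_finsetSum]
  rw [sum_eq_single_of_mem n (by simp [Nat.one_le_iff_ne_zero, hn]) hlower, zero_pow hn,
    kShift, Nat.sub_self, pow_zero, mul_one, kPoly_eval_zero, zero_sub]

theorem pp_self_eq {n : ℕ} (hn : n ≠ 0) :
    pp n n = 𝐯 ^ (-(n.choose 2 : ℤ)) * (-1) ^ (n - 1) * qprod 𝐯 (n - 1) := by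
  obtain ⟨m, rfl⟩ := Nat.exists_eq_add_one.mpr (Nat.pos_of_ne_zero hn)
  have hD := RatFunc.X_zpow_sub_zpow_neg_ne_zero (K := ℚ) hn
  have hQ := qprod_X_ne_zero (K := ℚ) m
  have hc : 𝐯 ^ (m + 1).choose 2 ≠ 0 := pow_ne_zero _ RatFunc.X_ne_zero
  have h := ppDefect_eval_zero hn
  rw [ppDefect_eq_zero hn, eval_zero, qprod_succ] at h
  rw [zpow_neg, zpow_natCast] at hD h ⊢
  rw [Nat.add_sub_cancel]
  generalize 𝐯 ^ (m + 1) - (𝐯 ^ (m + 1))⁻¹ = D at h hD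
  generalize 𝐯 ^ (m + 1).choose 2 = c at h hc ⊢
  generalize qprod 𝐯 m = Q at h hQ ⊢
  field_simp at h ⊢
  have hsign : ((-1 : RatFunc ℚ) ^ m) ^ 2 = 1 := by rw [← pow_mul, pow_mul', neg_one_sq, one_pow]
  linear_combination (-(-1) ^ m) * h - pp (m + 1) (m + 1) * c * hsign

end

/-- `p_{n,n} = v^{-n(n-1)/2} (-1)^{n-1} (v - v⁻¹)^{n-1} [n-1]_v!`. -/
theorem stmt_8 (n : ℕ) (hn : 1 ≤ n) :
    pp n n = (RatFunc.X : RatFunc ℚ) ^ (-(n.choose 2 : ℤ)) * (-1) ^ (n - 1) *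
      ((RatFunc.X : RatFunc ℚ) - (RatFunc.X : RatFunc ℚ)⁻¹) ^ (n - 1) *
        qfact (RatFunc.X : RatFunc ℚ) (n - 1) := by
  have hv1 : (RatFunc.X : RatFunc ℚ) - RatFunc.X⁻¹ ≠ 0 := by
    simpa using RatFunc.X_zpow_sub_zpow_neg_ne_zero (K := ℚ) one_ne_zero
  rw [pp_self_eq (Nat.one_le_iff_ne_zero.mp hn), qprod_eq_mul_qfact _ hv1]
  ring
end

section
/- Let ξ be a primitive ℓ'-th root of unity as above. In the specialization V⁰_𝔹, for m ∈ ℕ and t' ∈ {1,…,ℓ-1} one has k_{mℓ + t'} = k_{mℓ} · k_{t'}, i.e. the divided-power-type generators factor as a product of the ℓ-divisible part and the remainder part. In particular V⁰_𝔹 (rank one) is generated as an algebra by K and k_ℓ. -/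
open Finset

section AuxQlg

variable {F : Type*} [Field F] (v : F)

lemma qbinom_zero (n : ℕ) : qbinom v n 0 = 1 := by cases n <;> rfl

lemma qbinom_zero_left (k : ℕ) : qbinom v 0 (k+1) = 0 := rfl

lemma qbinom_succ (n k : ℕ) : qbinom v (n+1) (k+1) =
    v ^ (-((n : ℤ) - k)) * qbinom v n k + v ^ ((k : ℤ) + 1) * qbinom v n (k + 1) := rfl

lemma qbinom_big : ∀ n k, n < k → qbinom v n k = 0 := by
  intro n
  induction n with
  | zero => intro k hk; obtain ⟨k, rfl⟩ := Nat.exists_eq_add_of_lt hk; rfl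
  | succ n ih =>
    intro k hk
    obtain ⟨j, rfl⟩ : ∃ j, k = j + 1 := ⟨k - 1, by omega⟩
    rw [qbinom_succ, ih j (by omega), ih (j+1) (by omega)]
    ring

noncomputable def qlg (n k : ℕ) : F := v ^ ((k : ℤ) * ((n : ℤ) - k)) * qbinom v n k

lemma qlg_zero (n : ℕ) : qlg v n 0 = 1 := by simp [qlg, qbinom_zero]

lemma qlg_zero_left (k : ℕ) : qlg v 0 (k+1) = 0 := by simp [qlg, qbinom_zero_left]

lemma qlg_big (n k : ℕ) (h : n < k) : qlg v n k = 0 := by simp [qlg, qbinom_big v n k h]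

lemma qbinom_diag (n : ℕ) : qbinom v n n = 1 := by
  induction n with
  | zero => rfl
  | succ n ih =>
    rw [qbinom_succ, qbinom_big v n (n+1) (by omega), ih]
    simp

lemma qlg_diag (n : ℕ) : qlg v n n = 1 := by simp [qlg, qbinom_diag]

lemma qlg_pascal (hv : v ≠ 0) (n k : ℕ) :
    qlg v (n+1) (k+1) = qlg v n k + (v^2) ^ (k+1) * qlg v n (k+1) := by
  have h2 : ∀ m : ℕ, (v^2) ^ m = v ^ ((2*m : ℕ) : ℤ) := by
    intro m; rw [zpow_natCast, pow_mul]
  simp only [qlg, qbinom_succ, mul_add, ← mul_assoc, h2, ← zpow_natCast v (2*(k+1)), ← zpow_add₀ hv]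
  congr 2 <;> push_cast <;> ring

lemma qlg_pascal' (hv : v ≠ 0) : ∀ n k : ℕ,
    qlg v (n+1) (k+1) = (v^2) ^ ((n : ℤ) - k) * qlg v n k + qlg v n (k+1) := by
  have hq : (v:F)^2 ≠ 0 := pow_ne_zero 2 hv
  intro n
  induction n with
  | zero =>
    intro k
    cases k with
    | zero => simp [qlg_diag, qlg_zero, qlg_big v 0 1 (by omega)]
    | succ j =>
      rw [qlg_big v 1 (j+2) (by omega), qlg_big v 0 (j+1) (by omega),
        qlg_zero_left]
      ring
  | succ n ih =>
    intro k
    cases k with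
    | zero =>
      -- goal: qlg (n+2) 1 = (v^2)^(n+1) * qlg (n+1) 0 + qlg (n+1) 1
      have hP := qlg_pascal v hv (n+1) 0
      have hP0 := qlg_pascal v hv n 0
      have hI := ih 0
      rw [qlg_zero] at *
      rw [hP]
      rw [show (((n+1:ℕ)):ℤ) - ((0:ℕ):ℤ) = ((n+1 : ℕ) : ℤ) by push_cast; ring,
        zpow_natCast]
      rw [show ((n:ℕ):ℤ) - ((0:ℕ):ℤ) = ((n : ℕ) : ℤ) by push_cast; ring, zpow_natCast] at hI
      linear_combination (v^2) * hI - hP0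
    | succ j =>
      -- k = j+1
      have hP := qlg_pascal v hv (n+1) (j+1)
      have H1 := ih j          -- qlg (n+1) (j+1) = (v^2)^(n-j) * qlg n j + qlg n (j+1)
      have H2 := ih (j+1)      -- qlg (n+1) (j+2) = (v^2)^(n-(j+1)) * qlg n (j+1) + qlg n (j+2)
      have H3 := qlg_pascal v hv n j      -- qlg (n+1) (j+1) = qlg n j + (v^2)^(j+1) qlg n (j+1)
      have H4 := qlg_pascal v hv n (j+1)  -- qlg (n+1) (j+2) = qlg n (j+1) + (v^2)^(j+2) qlg n (j+2)
      have hs : (v^2) ^ ((n:ℤ) - j) = (v^2) * (v^2) ^ ((n:ℤ) - (j+1)) := by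
        rw [← zpow_one_add₀ hq]; congr 1; ring
      have hs2 : (v^2) ^ (((n:ℕ)+1:ℤ) - ((j:ℕ)+1)) = (v^2) ^ ((n:ℤ) - j) := by
        congr 1; push_cast; ring
      set s := (v^2) ^ ((n:ℤ) - ((j:ℤ)+1)) with hsdef
      rw [hs] at H1
      rw [show ((n:ℤ) - ((j:ℕ)+1:ℕ)) = (n:ℤ) - ((j:ℤ)+1) by push_cast; ring] at H2
      rw [hP, show (((n:ℕ)+1:ℕ):ℤ) - ((j:ℕ)+1:ℕ) = (n:ℤ) - j by push_cast; ring, hs]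
      -- goal now in terms of qlg n *, s, powers
      linear_combination H1 - (v^2 * s) * H3 + (v^2 * (v^2)^(j+1)) * H2 - H4

lemma qlg_row (hv : v ≠ 0) (ℓ : ℕ) (hℓ : 2 ≤ ℓ) (hq1 : (v^2) ^ ℓ = 1)
    (hqj : ∀ j, 1 ≤ j → j < ℓ → (v^2) ^ j ≠ 1) :
    ∀ j, 1 ≤ j → j < ℓ → qlg v ℓ j = 0 := by
  intro j hj1 hjℓ
  obtain ⟨L, rfl⟩ : ∃ L, ℓ = L + 1 := ⟨ℓ - 1, by omega⟩
  obtain ⟨i, rfl⟩ : ∃ i, j = i + 1 := ⟨j - 1, by omega⟩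
  have hP := qlg_pascal v hv L i
  have hP' := qlg_pascal' v hv L i
  rw [show ((L:ℕ):ℤ) - ((i:ℕ):ℤ) = (((L - i : ℕ)):ℤ) by push_cast [Nat.cast_sub (by omega : i ≤ L)]; ring,
    zpow_natCast] at hP'
  -- (1 - q^{L-i}) g(L,i) = (1 - q^{i+1}) g(L,i+1)
  have hne : (1 : F) - (v^2) ^ (L - i) ≠ 0 := by
    intro h
    exact hqj (L - i) (by omega) (by omega) (sub_eq_zero.mp h).symm
  have hmul : (v^2) ^ (L - i) * (v^2) ^ (i+1) = 1 := by
    rw [← pow_add, show L - i + (i+1) = L + 1 by omega, hq1]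
  have key : (1 - (v^2) ^ (L - i)) * qlg v L i = (1 - (v^2)^(i+1)) * qlg v L (i+1) := by
    linear_combination hP' - hP
  have : (1 - (v^2) ^ (L - i)) * qlg v (L+1) (i+1) = 0 := by
    rw [hP]
    linear_combination key - qlg v L (i+1) * hmul
  exact (mul_eq_zero.mp this).resolve_left hne

lemma qlg_lucas (hv : v ≠ 0) (ℓ : ℕ) (hℓ : 2 ≤ ℓ) (hq1 : (v^2) ^ ℓ = 1)
    (hqj : ∀ j, 1 ≤ j → j < ℓ → (v^2) ^ j ≠ 1) :
    ∀ N a b c d, a * ℓ + b = N → b < ℓ → d < ℓ →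
      qlg v (a*ℓ+b) (c*ℓ+d) = (a.choose c : F) * qlg v b d := by
  have hpow : ∀ c e : ℕ, (v^2) ^ (c*ℓ + e) = (v^2) ^ e := by
    intro c e
    rw [pow_add, mul_comm c ℓ, pow_mul, hq1, one_pow, one_mul]
  intro N
  induction N using Nat.strong_induction_on with
  | _ N IH =>
    intro a b c d hN hb hd
    subst hN
    rcases Nat.eq_zero_or_pos a with ha | ha
    · subst ha
      rcases Nat.eq_zero_or_pos c with hc | hc
      · subst hc; simp
      · obtain ⟨c', rfl⟩ : ∃ c', c = c' + 1 := ⟨c - 1, by omega⟩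
        rw [qlg_big v _ _ (by simp only [zero_mul, zero_add]; nlinarith),
          Nat.choose_eq_zero_of_lt (by omega)]
        simp
    obtain ⟨a', rfl⟩ : ∃ a', a = a' + 1 := ⟨a - 1, by omega⟩
    rcases Nat.eq_zero_or_pos b with hb0 | hb0
    · subst hb0
      rcases Nat.eq_zero_or_pos d with hd0 | hd0
      · subst hd0
        rcases Nat.eq_zero_or_pos c with hc | hc
        · subst hc; simp [qlg_zero]
        obtain ⟨c', rfl⟩ : ∃ c', c = c' + 1 := ⟨c - 1, by omega⟩
        rw [show (a'+1)*ℓ + 0 = (a'*ℓ + (ℓ-1)) + 1 by rw [add_mul, one_mul]; omega,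
          show (c'+1)*ℓ + 0 = (c'*ℓ + (ℓ-1)) + 1 by rw [add_mul, one_mul]; omega,
          qlg_pascal v hv]
        rw [show a'*ℓ + (ℓ-1) = a'*ℓ + (ℓ-1) from rfl]
        rw [IH (a'*ℓ + (ℓ-1)) (by rw [add_mul, one_mul]; omega) a' (ℓ-1) c' (ℓ-1) rfl (by omega) (by omega)]
        rw [show c'*ℓ + (ℓ-1) + 1 = (c'+1)*ℓ + 0 by rw [add_mul, one_mul]; omega]
        rw [IH (a'*ℓ + (ℓ-1)) (by rw [add_mul, one_mul]; omega) a' (ℓ-1) (c'+1) 0 rfl (by omega) (by omega)]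
        rw [hpow (c'+1) 0, Nat.choose_succ_succ']
        simp [qlg_diag, qlg_zero]
      · obtain ⟨d', rfl⟩ : ∃ d', d = d' + 1 := ⟨d - 1, by omega⟩
        rw [show (a'+1)*ℓ + 0 = (a'*ℓ + (ℓ-1)) + 1 by rw [add_mul, one_mul]; omega,
          show c*ℓ + (d'+1) = (c*ℓ + d') + 1 by omega,
          qlg_pascal v hv]
        rw [IH (a'*ℓ + (ℓ-1)) (by rw [add_mul, one_mul]; omega) a' (ℓ-1) c d' rfl (by omega) (by omega)]
        rw [show c*ℓ + d' + 1 = c*ℓ + (d'+1) by omega]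
        rw [IH (a'*ℓ + (ℓ-1)) (by rw [add_mul, one_mul]; omega) a' (ℓ-1) c (d'+1) rfl (by omega) (by omega)]
        rw [hpow c (d'+1), qlg_zero_left]
        have hrow : qlg v ((ℓ-1)+1) (d'+1) = 0 := by
          rw [show (ℓ-1)+1 = ℓ by omega]
          exact qlg_row v hv ℓ hℓ hq1 hqj (d'+1) (by omega) (by omega)
        rw [qlg_pascal v hv (ℓ-1) d'] at hrow
        linear_combination ((a'.choose c : F)) * hrow
    · obtain ⟨b', rfl⟩ : ∃ b', b = b' + 1 := ⟨b - 1, by omega⟩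
      rcases Nat.eq_zero_or_pos d with hd0 | hd0
      · subst hd0
        rcases Nat.eq_zero_or_pos c with hc | hc
        · subst hc; simp [qlg_zero]
        obtain ⟨c', rfl⟩ : ∃ c', c = c' + 1 := ⟨c - 1, by omega⟩
        rw [show (a'+1)*ℓ + (b'+1) = ((a'+1)*ℓ + b') + 1 by omega,
          show (c'+1)*ℓ + 0 = (c'*ℓ + (ℓ-1)) + 1 by rw [add_mul, one_mul]; omega,
          qlg_pascal v hv]
        rw [IH ((a'+1)*ℓ + b') (by omega) (a'+1) b' c' (ℓ-1) rfl (by omega) (by omega)]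
        rw [show c'*ℓ + (ℓ-1) + 1 = (c'+1)*ℓ + 0 by rw [add_mul, one_mul]; omega]
        rw [IH ((a'+1)*ℓ + b') (by omega) (a'+1) b' (c'+1) 0 rfl (by omega) (by omega)]
        rw [hpow (c'+1) 0, qlg_big v b' (ℓ-1) (by omega), qlg_zero, qlg_zero]
        ring
      · obtain ⟨d', rfl⟩ : ∃ d', d = d' + 1 := ⟨d - 1, by omega⟩
        rw [show (a'+1)*ℓ + (b'+1) = ((a'+1)*ℓ + b') + 1 by omega,
          show c*ℓ + (d'+1) = (c*ℓ + d') + 1 by omega,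
          qlg_pascal v hv]
        rw [IH ((a'+1)*ℓ + b') (by omega) (a'+1) b' c d' rfl (by omega) (by omega)]
        rw [show c*ℓ + d' + 1 = c*ℓ + (d'+1) by omega]
        rw [IH ((a'+1)*ℓ + b') (by omega) (a'+1) b' c (d'+1) rfl (by omega) (by omega)]
        rw [hpow c (d'+1), qlg_pascal v hv b' d']
        ring


end AuxQlg

/-- In the specialization of Lusztig's `V⁰` at a primitive `ℓ'`-th root of unity,
`k_{mℓ + t'} = k_{mℓ} · k_{t'}` for `t' ∈ {1, …, ℓ-1}`. -/
theorem stmt_13 {𝔹 : Type*} [Field 𝔹] [CharZero 𝔹]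
    (ℓ ℓ' : ℕ) (hℓ : 2 ≤ ℓ) (hℓ' : ℓ' = if Odd ℓ then ℓ else 2 * ℓ)
    (ξ : 𝔹) (hξ : IsPrimitiveRoot ξ ℓ')
    {A : Type*} [CommRing A] [Algebra 𝔹 A]
    (K : A) (hK : K ^ (2 * ℓ) = 1)
    (k : ℕ → A) (hk0 : k 0 = 1)
    (hg8 : ∀ t t' : ℕ, 1 ≤ t →
      qbinom ξ (t + t') t • k (t + t') =
        ∑ j ∈ Finset.range (t' + 1),
          ((-1 : 𝔹) ^ j * ξ ^ (t * (t' - j)) * qbinom ξ (t + j - 1) j) •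
            (K ^ j * (k t * k (t' - j)))) :
    ∀ m t' : ℕ, 1 ≤ m → 1 ≤ t' → t' ≤ ℓ - 1 →
      k (m * ℓ + t') = k (m * ℓ) * k t' := by
  have hℓ'pos : ℓ' ≠ 0 := by rw [hℓ']; split <;> omega
  have hξ0 : ξ ≠ 0 := hξ.ne_zero hℓ'pos
  have hdvd2ℓ : ℓ' ∣ 2 * ℓ := by
    rw [hℓ']; split
    · exact ⟨2, by ring⟩
    · exact dvd_rfl
  have hq1 : (ξ^2) ^ ℓ = 1 := by
    rw [← pow_mul, hξ.pow_eq_one_iff_dvd]; exact hdvd2ℓ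
  have hqj : ∀ j, 1 ≤ j → j < ℓ → (ξ^2) ^ j ≠ 1 := by
    intro j hj1 hjℓ h
    rw [← pow_mul, hξ.pow_eq_one_iff_dvd] at h
    rw [hℓ'] at h
    by_cases hodd : Odd ℓ
    · rw [if_pos hodd] at h
      have : ℓ ∣ j := (Nat.Coprime.dvd_of_dvd_mul_left
        (Nat.coprime_two_right.mpr hodd) h)
      exact absurd (Nat.le_of_dvd (by omega) this) (by omega)
    · rw [if_neg hodd] at h
      have : ℓ ∣ j := (mul_dvd_mul_iff_left (two_ne_zero)).mp h
      exact absurd (Nat.le_of_dvd (by omega) this) (by omega)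
  have hqb : ∀ n j : ℕ, qbinom ξ n j = ξ ^ (-((j:ℤ) * ((n:ℤ) - j))) * qlg ξ n j := by
    intro n j
    rw [qlg, ← mul_assoc, ← zpow_add₀ hξ0]
    simp
  have hlucas := qlg_lucas ξ hξ0 ℓ hℓ hq1 hqj
  intro m t' hm ht1 ht2
  have htℓ : t' < ℓ := by omega
  set n := m * ℓ with hn
  have hn1 : 1 ≤ n := Nat.mul_pos (by omega) (by omega)
  have h8 := hg8 n t' hn1
  -- coefficient on the left
  have hA' : qlg ξ (n + t') n = 1 := by
    have h := hlucas (m*ℓ + t') m t' m 0 rfl htℓ (by omega)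
    rw [Nat.add_zero] at h
    rw [← hn] at h
    rw [h, Nat.choose_self, qlg_zero]
    simp
  have hA : qbinom ξ (n + t') n = ξ ^ (-((n:ℤ) * t')) := by
    rw [hqb, hA', mul_one]
    congr 1
    push_cast; ring
  -- vanishing of the j ≥ 1 coefficients
  have hB : ∀ i, i < t' → qbinom ξ (n + i) (i + 1) = 0 := by
    intro i hi
    have h := hlucas (m*ℓ + i) m i 0 (i+1) rfl (by omega) (by omega)
    rw [zero_mul, zero_add, ← hn] at h
    rw [hqb, h, qlg_big ξ i (i+1) (by omega)]
    ring
  rw [Finset.sum_range_succ'] at h8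
  have hzero : ∀ i ∈ Finset.range t',
      ((-1 : 𝔹) ^ (i+1) * ξ ^ (n * (t' - (i+1))) * qbinom ξ (n + (i+1) - 1) (i+1)) •
        (K ^ (i+1) * (k n * k (t' - (i+1)))) = 0 := by
    intro i hi
    rw [Finset.mem_range] at hi
    rw [show n + (i+1) - 1 = n + i by omega, hB i hi, mul_zero, zero_smul]
  rw [Finset.sum_eq_zero hzero, zero_add] at h8
  simp only [pow_zero, Nat.sub_zero, one_mul, qbinom_zero, mul_one] at h8
  rw [hA] at h8
  have h8' := congrArg (fun x => (ξ ^ ((n:ℤ) * t')) • x) h8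
  simp only [smul_smul, ← zpow_add₀ hξ0] at h8'
  rw [show (n:ℤ) * t' + -((n:ℤ) * t') = 0 by ring, zpow_zero, one_smul] at h8'
  rw [h8']
  have hone : ξ ^ ((n:ℤ) * t') * ξ ^ (n * t') = 1 := by
    rw [show ((n:ℤ) * t') = ((n * t' : ℕ) : ℤ) by push_cast; ring, zpow_natCast, ← pow_add,
      hξ.pow_eq_one_iff_dvd]
    exact dvd_trans hdvd2ℓ ⟨m * t', by rw [hn]; ring⟩
  rw [hone, one_smul]
end

section
/- Let A be an algebra over a field k containing ξ with ξ² ≠ 1, generated by elements E, h with relations E^ℓ = 0 (ℓ ≥ 2 with ξ^{-2} a primitive ℓ-th root of unity) and [h, E] = cE + d(1 - g), where g is invertible, gE = ξ^{-2}Eg (so that moving g past powers of E accumulates ξ^{-2k}), and {E^{ℓ-1}, E^{ℓ-1}g} linearly independent. Then d = 0. Concretely: 0 = [h, E^ℓ] = Σ_{k=1}^{ℓ} E^{k-1}(cE + d(1-g))E^{ℓ-k} = d(ℓ E^{ℓ-1} - (Σ_{k=1}^{ℓ} ξ^{-2k}) E^{ℓ-1} g) = d·ℓ·E^{ℓ-1},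 and E^{ℓ-1} ≠ 0 forces d = 0. -/
/-- If `E^ℓ = 0`, `gE = ξ^{-2}Eg`, `{E^{ℓ-1}, E^{ℓ-1}g}` is linearly independent and
`[h, E] = cE + d(1-g)` with `ξ²` a primitive `ℓ`-th root of unity, then `d = 0`. -/
theorem stmt_19 {k : Type*} [Field k] [CharZero k]
    (ℓ : ℕ) (hℓ : 2 ≤ ℓ) (ξ : k) (hξ : IsPrimitiveRoot (ξ ^ 2) ℓ)
    {A : Type*} [Ring A] [Algebra k A]
    (E h g : A) (hg : IsUnit g)
    (hgE : g * E = (ξ ^ 2)⁻¹ • (E * g))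
    (hEℓ : E ^ ℓ = 0)
    (hli : ∀ a b : k, a • E ^ (ℓ - 1) + b • (E ^ (ℓ - 1) * g) = 0 → a = 0 ∧ b = 0)
    (c d : k) (hbr : h * E - E * h = c • E + d • ((1 : A) - g)) :
    d = 0 := by
  set q : k := (ξ ^ 2)⁻¹ with hqdef
  have hq : IsPrimitiveRoot q ℓ := hξ.inv
  -- g past powers of E
  have hgEm : ∀ m : ℕ, g * E ^ m = q ^ m • (E ^ m * g) := by
    intro m
    induction m with
    | zero => simp
    | succ n ih =>
      calc g * E ^ (n+1) = (g * E ^ n) * E := by rw [pow_succ, mul_assoc]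
        _ = q ^ n • (E ^ n * g * E) := by rw [ih, smul_mul_assoc]
        _ = q ^ n • (E ^ n * (q • (E * g))) := by rw [mul_assoc, hgE]
        _ = q ^ (n+1) • (E ^ (n+1) * g) := by
            rw [mul_smul_comm, smul_smul, ← pow_succ, pow_succ E n, mul_assoc]
  -- commutator with powers
  have hcomm : ∀ n : ℕ, h * E ^ n - E ^ n * h
      = ∑ i ∈ Finset.range n, E ^ i * (h * E - E * h) * E ^ (n - 1 - i) := by
    intro n
    induction n with
    | zero => simp
    | succ n ih =>
      rw [Finset.sum_range_succ]
      have h1 : h * E ^ (n+1) - E ^ (n+1) * h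
          = (h * E ^ n - E ^ n * h) * E + E ^ n * (h * E - E * h) := by
        simp only [pow_succ]; noncomm_ring
      rw [h1, ih, Finset.sum_mul]
      congr 1
      · apply Finset.sum_congr rfl
        intro i hi
        simp only [Finset.mem_range] at hi
        have he : n + 1 - 1 - i = (n - 1 - i) + 1 := by omega
        rw [he, pow_succ, mul_assoc]
      · simp
  have hterm : ∀ i ∈ Finset.range ℓ,
      E ^ i * (c • E + d • ((1:A) - g)) * E ^ (ℓ - 1 - i)
        = d • E ^ (ℓ - 1) + (-(d * q ^ (ℓ - 1 - i))) • (E ^ (ℓ - 1) * g) := by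
    intro i hi
    simp only [Finset.mem_range] at hi
    have h0 : E ^ i * E * E ^ (ℓ - 1 - i) = 0 := by
      rw [← pow_succ, ← pow_add]
      have : i + 1 + (ℓ - 1 - i) = ℓ := by omega
      rw [this, hEℓ]
    have h1 : E ^ i * E ^ (ℓ - 1 - i) = E ^ (ℓ - 1) := by
      rw [← pow_add]
      congr 1
      omega
    have h2 : E ^ i * (g * E ^ (ℓ - 1 - i)) = q ^ (ℓ - 1 - i) • (E ^ (ℓ - 1) * g) := by
      rw [hgEm, mul_smul_comm, ← mul_assoc, h1]
    have expand : E ^ i * (c • E + d • ((1:A) - g)) * E ^ (ℓ - 1 - i)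
        = c • (E ^ i * E * E ^ (ℓ - 1 - i)) + d • (E ^ i * E ^ (ℓ - 1 - i))
          - d • (E ^ i * (g * E ^ (ℓ - 1 - i))) := by
      simp only [smul_sub, mul_sub, sub_mul, mul_add, add_mul, mul_smul_comm,
        smul_mul_assoc, mul_one, mul_assoc]
      abel
    rw [expand, h0, h1, h2, smul_zero, zero_add, smul_smul, neg_smul, sub_eq_add_neg]
  have hsum0 : (0 : A) = ∑ i ∈ Finset.range ℓ, E ^ i * (c • E + d • ((1:A) - g)) * E ^ (ℓ - 1 - i) := by
    rw [← hbr, ← hcomm ℓ, hEℓ]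
    simp
  rw [Finset.sum_congr rfl hterm, Finset.sum_add_distrib, Finset.sum_const,
    Finset.card_range, ← Finset.sum_smul] at hsum0
  have hgeo : ∑ i ∈ Finset.range ℓ, -(d * q ^ (ℓ - 1 - i)) = 0 := by
    have hr : ∑ i ∈ Finset.range ℓ, -(d * q ^ (ℓ - 1 - i))
        = ∑ i ∈ Finset.range ℓ, -(d * q ^ i) := Finset.sum_range_reflect (fun i => -(d * q ^ i)) ℓ
    have hz := hq.geom_sum_eq_zero (by omega : 1 < ℓ)
    rw [hr, Finset.sum_neg_distrib, ← Finset.mul_sum, hz, mul_zero, neg_zero]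
  rw [hgeo, zero_smul, add_zero, ← Nat.cast_smul_eq_nsmul k, smul_smul] at hsum0
  have hkey : ((ℓ : k) * d) • E ^ (ℓ - 1) + (0 : k) • (E ^ (ℓ - 1) * g) = 0 := by
    rw [zero_smul, add_zero, ← hsum0]
  have hℓd := (hli _ _ hkey).1
  have hℓ0 : (ℓ : k) ≠ 0 := Nat.cast_ne_zero.mpr (by omega)
  exact (mul_eq_zero.mp hℓd).resolve_left hℓ0
end
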